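/- Let n ≥ 1 and let φ ∈ L^∞((0,∞)). Define α(ε) = ∫_0^1 φ(t) ∫_{{y ∈ ℝ^n : |y| < ε}} ∂^2/∂y_1^2 ( e^{-|y|^2/(4t)} / (2√(π t))^n ) dy dt for ε > 0. Then there exists a constant C > 0 (depending only on n and the L^∞ norm of φ) such that |α(ε)| ≤ C for every ε > 0. -/

import Mathlib

open Real MeasureTheory Set
open scoped ENNReal

/-- The Gauss–Weierstrass kernel `e^{-|y|²/(4t)}/(2√(πt))^n` on `ℝ^n`. -/
noncomputable def gaussKer (n : ℕ) (t : ℝ) (y : Fin n → ℝ) : ℝ :=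
  Real.exp (-(∑ j, y j ^ 2) / (4 * t)) / (2 * Real.sqrt (π * t)) ^ n

/-- The second partial derivative `∂²/∂y₁²` of the Gauss–Weierstrass kernel. -/
noncomputable def d2GaussKer (n : ℕ) (hn : 0 < n) (t : ℝ) (y : Fin n → ℝ) : ℝ :=
  deriv (deriv (fun v : ℝ => gaussKer n t (Function.update y ⟨0, hn⟩ v))) (y ⟨0, hn⟩)

/-- `α(ε) = ∫_0^1 φ(t) ∫_{|y|<ε} ∂²/∂y₁² (e^{-|y|²/(4t)}/(2√(πt))^n) dy dt`. -/
noncomputable def alphaFun (n : ℕ) (hn : 0 < n) (φ : ℝ → ℝ) (ε : ℝ) : ℝ :=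
  ∫ t in Ioc (0 : ℝ) 1, φ t *
    ∫ y in {y : Fin n → ℝ | Real.sqrt (∑ j, y j ^ 2) < ε}, d2GaussKer n hn t y

/-!
`∂₁²G_t = (y₁²/(4t²) - 1/(2t)) G_t` is the `y₁`-derivative of `-(y₁/(2t)) G_t`, so integrating
first in `y₁` across the ball leaves only boundary values on the sphere `|y| = ε`, where `G_t` is
`e^{-ε²/(4t)}/(2√(πt))^n`. Thus the inner integral is `-e^{-ε²/(4t)}/(t (2√(πt))^n)` times
`∫_{ℝ^{n-1}} √(ε² - |w|²) dw ≤ ε (2ε)^{n-1}`. This cancellation is essential: for `t ≪ ε²` the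
integral of `|∂₁²G_t|` over the ball is of size `1/t`. What remains is the scale-invariant bound
`ε^n ∫_0^∞ e^{-ε²/(4t)} t^{-n/2-1} dt ≤ C`, from `e^{-x} ≤ n! x^{-n}` for `t < ε²` and
`e^{-x} ≤ 1` for `t > ε²`.
-/

section GaussianProfile

variable {t : ℝ} (c : ℝ)

lemma hasDerivAt_exp_gaussian (ht : t ≠ 0) (v : ℝ) :
    HasDerivAt (fun v => exp (-(v ^ 2 + c) / (4 * t)))
      (-(v / (2 * t)) * exp (-(v ^ 2 + c) / (4 * t))) v := by
  have h : HasDerivAt (fun v => -(v ^ 2 + c) / (4 * t)) (-(2 * v) / (4 * t)) v := by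
    simpa using ((hasDerivAt_pow 2 v).add_const c).neg.div_const (4 * t)
  refine h.exp.congr_deriv ?_
  field_simp
  ring

lemma hasDerivAt_deriv_exp_gaussian (ht : t ≠ 0) (v : ℝ) :
    HasDerivAt (fun v => -(v / (2 * t)) * exp (-(v ^ 2 + c) / (4 * t)))
      ((v ^ 2 / (4 * t ^ 2) - 1 / (2 * t)) * exp (-(v ^ 2 + c) / (4 * t))) v := by
  have h : HasDerivAt (fun v => -(v / (2 * t))) (-(1 / (2 * t))) v :=
    ((hasDerivAt_id v).div_const _).neg
  refine (h.mul (hasDerivAt_exp_gaussian c ht v)).congr_deriv ?_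
  field_simp
  ring

lemma integral_Ioo_deriv_deriv_exp_gaussian (ht : t ≠ 0) {a : ℝ} (ha : 0 ≤ a) :
    ∫ v in Ioo (-a) a, (v ^ 2 / (4 * t ^ 2) - 1 / (2 * t)) * exp (-(v ^ 2 + c) / (4 * t)) =
      -(a / t) * exp (-(a ^ 2 + c) / (4 * t)) := by
  rw [← integral_Ioc_eq_integral_Ioo, ← intervalIntegral.integral_of_le (by linarith),
    intervalIntegral.integral_eq_sub_of_hasDerivAt
      (fun v _ => hasDerivAt_deriv_exp_gaussian c ht v)
      ((by fun_prop : Continuous _).intervalIntegrable _ _), neg_sq]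
  field_simp
  ring

end GaussianProfile

lemma sum_sq_update {n : ℕ} (y : Fin n → ℝ) (i : Fin n) (v : ℝ) :
    ∑ j, Function.update y i v j ^ 2 = v ^ 2 + (∑ j, y j ^ 2 - y i ^ 2) := by
  calc ∑ j, Function.update y i v j ^ 2
      = ∑ j, Function.update (fun j => y j ^ 2) i (v ^ 2) j :=
        Finset.sum_congr rfl fun j _ => Function.apply_update (fun _ x => x ^ 2) y i v j
    _ = v ^ 2 + ∑ j ∈ Finset.univ \ {i}, y j ^ 2 := Finset.sum_update_of_mem (Finset.mem_univ i) _ _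
    _ = v ^ 2 + (∑ j, y j ^ 2 - y i ^ 2) := by
      rw [Finset.sdiff_singleton_eq_erase, ← Finset.add_sum_erase _ _ (Finset.mem_univ i)]
      ring

lemma deriv_deriv_gaussKer_update {n : ℕ} {t : ℝ} (ht : t ≠ 0) (y : Fin n → ℝ) (i : Fin n) :
    deriv (deriv fun v => gaussKer n t (Function.update y i v)) (y i) =
      (y i ^ 2 / (4 * t ^ 2) - 1 / (2 * t)) * gaussKer n t y := by
  set c := ∑ j, y j ^ 2 - y i ^ 2
  set D := (2 * √(π * t)) ^ n
  have hprofile : (fun v => gaussKer n t (Function.update y i v)) =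
      fun v => exp (-(v ^ 2 + c) / (4 * t)) / D := by
    funext v
    rw [gaussKer, sum_sq_update]
  have hderiv : deriv (fun v => exp (-(v ^ 2 + c) / (4 * t)) / D) =
      fun v => -(v / (2 * t)) * exp (-(v ^ 2 + c) / (4 * t)) / D :=
    funext fun v => ((hasDerivAt_exp_gaussian c ht v).div_const D).deriv
  rw [hprofile, hderiv, ((hasDerivAt_deriv_exp_gaussian c ht (y i)).div_const D).deriv, gaussKer,
    show y i ^ 2 + c = ∑ j, y j ^ 2 by ring]
  ring

lemma d2GaussKer_eq {n : ℕ} (hn : 0 < n) {t : ℝ} (ht : t ≠ 0) (y : Fin n → ℝ) :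
    d2GaussKer n hn t y = (y ⟨0, hn⟩ ^ 2 / (4 * t ^ 2) - 1 / (2 * t)) * gaussKer n t y :=
  deriv_deriv_gaussKer_update ht y _

lemma sq_le_sum_sq {ι : Type*} [Fintype ι] (y : ι → ℝ) (j : ι) : y j ^ 2 ≤ ∑ i, y i ^ 2 :=
  Finset.single_le_sum (f := fun i => y i ^ 2) (fun i _ => sq_nonneg (y i)) (Finset.mem_univ j)

section Ball

variable {E : Type*} [NormedAddCommGroup E]

lemma Continuous.integrableOn_sqrt_sum_sq_lt {n : ℕ} {f : (Fin n → ℝ) → E} (hf : Continuous f)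
    (ε : ℝ) : IntegrableOn f {y | √(∑ j, y j ^ 2) < ε} := by
  refine (hf.continuousOn.integrableOn_compact (isCompact_closedBall 0 ε)).mono_set fun y hy => ?_
  have hε : 0 ≤ ε := (sqrt_nonneg _).trans hy.out.le
  refine mem_closedBall_zero_iff.2 ((pi_norm_le_iff_of_nonneg hε).2 fun j => ?_)
  exact (abs_le_sqrt (sq_le_sum_sq y j)).trans hy.out.le

lemma sqrt_sq_add_lt_iff_mem_Ioo {ε : ℝ} (hε : 0 < ε) (c v : ℝ) :
    √(v ^ 2 + c) < ε ↔ v ∈ Ioo (-√(ε ^ 2 - c)) √(ε ^ 2 - c) := by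
  rw [sqrt_lt' hε, ← lt_sub_iff_add_lt, sq_lt, mem_Ioo]

-- For `ε ^ 2 ≤ ∑ j, w j ^ 2` the slice is `Ioo 0 0 = ∅`, as `√` vanishes on negative numbers.
lemma setIntegral_sqrt_sum_sq_lt_eq_integral_integral [NormedSpace ℝ E] {m : ℕ} {ε : ℝ}
    (hε : 0 < ε) {f : (Fin (m + 1) → ℝ) → E} (hf : IntegrableOn f {y | √(∑ j, y j ^ 2) < ε}) :
    ∫ y in {y | √(∑ j, y j ^ 2) < ε}, f y =
      ∫ w : Fin m → ℝ, ∫ v in Ioo (-√(ε ^ 2 - ∑ j, w j ^ 2)) √(ε ^ 2 - ∑ j, w j ^ 2),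
        f (Fin.cons v w) := by
  set S := {y : Fin (m + 1) → ℝ | √(∑ j, y j ^ 2) < ε}
  set e := (MeasurableEquiv.piFinSuccAbove (fun _ : Fin (m + 1) => ℝ) 0).symm
  have he : MeasurePreserving e :=
    (volume_preserving_piFinSuccAbove (fun _ : Fin (m + 1) => ℝ) 0).symm
  have he_apply : ∀ p : ℝ × (Fin m → ℝ), e p = Fin.cons p.1 p.2 := fun p =>
    Fin.insertNth_zero' p.1 p.2
  have hS : MeasurableSet S := measurableSet_lt (by fun_prop) measurable_const
  have hslice : ∀ w : Fin m → ℝ, (fun v => (e ⁻¹' S).indicator (fun p => f (e p)) (v, w)) =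
      (Ioo (-√(ε ^ 2 - ∑ j, w j ^ 2)) √(ε ^ 2 - ∑ j, w j ^ 2)).indicator
        fun v => f (Fin.cons v w) := by
    intro w
    funext v
    simp only [indicator, mem_preimage, he_apply, S, mem_ofPred_eq, Fin.sum_univ_succ,
      Fin.cons_zero, Fin.cons_succ, sqrt_sq_add_lt_iff_mem_Ioo hε]
  have hint : Integrable ((e ⁻¹' S).indicator fun p => f (e p)) (volume.prod volume) :=
    (((he.integrableOn_comp_preimage e.measurableEmbedding).2 hf).integrable_indicator
      (hS.preimage e.measurable))
  rw [← he.setIntegral_preimage_emb e.measurableEmbedding,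
    ← integral_indicator (hS.preimage e.measurable), Measure.volume_eq_prod,
    integral_prod_symm _ hint]
  simp_rw [hslice, integral_indicator measurableSet_Ioo]

end Ball

lemma continuous_gaussKer (n : ℕ) (t : ℝ) : Continuous (gaussKer n t) := by
  unfold gaussKer
  fun_prop

-- The value of `gaussKer n t` on the sphere `|y| = ε`, divided by `t`.
noncomputable def timeKer (n : ℕ) (ε t : ℝ) : ℝ :=
  exp (-ε ^ 2 / (4 * t)) / (t * (2 * √(π * t)) ^ n)

lemma integral_Ioo_d2GaussKer_cons {m : ℕ} (hn : 0 < m + 1) {t ε : ℝ} (ht : t ≠ 0)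
    (w : Fin m → ℝ) :
    ∫ v in Ioo (-√(ε ^ 2 - ∑ j, w j ^ 2)) √(ε ^ 2 - ∑ j, w j ^ 2),
        d2GaussKer (m + 1) hn t (Fin.cons v w) =
      -timeKer (m + 1) ε t * √(ε ^ 2 - ∑ j, w j ^ 2) := by
  set c := ∑ j, w j ^ 2
  set D := (2 * √(π * t)) ^ (m + 1)
  have hexp : √(ε ^ 2 - c) * exp (-(√(ε ^ 2 - c) ^ 2 + c) / (4 * t)) =
      √(ε ^ 2 - c) * exp (-ε ^ 2 / (4 * t)) := by
    rcases le_total c (ε ^ 2) with h | h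
    · rw [sq_sqrt (sub_nonneg.2 h), sub_add_cancel]
    · rw [sqrt_eq_zero'.2 (sub_nonpos.2 h), zero_mul, zero_mul]
  have hcons : ∀ v, d2GaussKer (m + 1) hn t (Fin.cons v w) =
      (v ^ 2 / (4 * t ^ 2) - 1 / (2 * t)) * exp (-(v ^ 2 + c) / (4 * t)) / D := fun v => by
    rw [d2GaussKer_eq hn ht, gaussKer, Fin.sum_univ_succ, mul_div_assoc]
    rfl
  simp_rw [hcons]
  rw [integral_div, integral_Ioo_deriv_deriv_exp_gaussian c ht (sqrt_nonneg _), timeKer]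
  calc -(√(ε ^ 2 - c) / t) * exp (-(√(ε ^ 2 - c) ^ 2 + c) / (4 * t)) / D
      = -(√(ε ^ 2 - c) * exp (-(√(ε ^ 2 - c) ^ 2 + c) / (4 * t))) / (t * D) := by ring
    _ = -(exp (-ε ^ 2 / (4 * t)) / (t * D)) * √(ε ^ 2 - c) := by rw [hexp]; ring

lemma setIntegral_d2GaussKer {m : ℕ} (hn : 0 < m + 1) {t ε : ℝ} (ht : t ≠ 0) (hε : 0 < ε) :
    ∫ y in {y : Fin (m + 1) → ℝ | √(∑ j, y j ^ 2) < ε}, d2GaussKer (m + 1) hn t y =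
      -timeKer (m + 1) ε t * ∫ w : Fin m → ℝ, √(ε ^ 2 - ∑ j, w j ^ 2) := by
  have hcont : Continuous (d2GaussKer (m + 1) hn t) := by
    rw [funext (d2GaussKer_eq hn ht)]
    exact (((continuous_apply _).pow 2).div_const _ |>.sub continuous_const).mul
      (continuous_gaussKer _ _)
  rw [setIntegral_sqrt_sum_sq_lt_eq_integral_integral hε (hcont.integrableOn_sqrt_sum_sq_lt ε)]
  simp_rw [integral_Ioo_d2GaussKer_cons hn ht]
  exact integral_const_mul _ _

lemma integral_sqrt_sub_sum_sq_le {m : ℕ} {ε : ℝ} (hε : 0 ≤ ε) :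
    ∫ w : Fin m → ℝ, √(ε ^ 2 - ∑ j, w j ^ 2) ≤ ε * (2 * ε) ^ m := by
  have hsupp : ∀ w ∉ Metric.closedBall (0 : Fin m → ℝ) ε, √(ε ^ 2 - ∑ j, w j ^ 2) = 0 := by
    intro w hw
    obtain ⟨j, hj⟩ : ∃ j, ε < |w j| := by
      simpa [mem_closedBall_zero_iff, pi_norm_le_iff_of_nonneg hε] using hw
    refine sqrt_eq_zero'.2 (sub_nonpos.2 ?_)
    calc ε ^ 2 ≤ w j ^ 2 := by nlinarith [sq_abs (w j), abs_nonneg (w j)]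
      _ ≤ ∑ i, w i ^ 2 := sq_le_sum_sq w j
  have hbound : ∀ w ∈ Metric.closedBall (0 : Fin m → ℝ) ε, ‖√(ε ^ 2 - ∑ j, w j ^ 2)‖ ≤ ε := by
    intro w _
    rw [norm_of_nonneg (sqrt_nonneg _), sqrt_le_left hε]
    exact sub_le_self _ (by positivity)
  rw [← setIntegral_eq_integral_of_forall_compl_eq_zero hsupp]
  refine (le_abs_self _).trans ((norm_setIntegral_le_of_norm_le_const measure_closedBall_lt_top
    hbound).trans_eq ?_)
  rw [measureReal_def, Real.volume_pi_closedBall _ hε, Fintype.card_fin,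
    ENNReal.toReal_ofReal (by positivity)]

lemma exp_neg_le_factorial_div_pow {x : ℝ} (hx : 0 < x) (k : ℕ) :
    exp (-x) ≤ k.factorial / x ^ k := by
  rw [exp_neg, ← inv_div]
  exact inv_anti₀ (by positivity) (pow_div_factorial_le_exp x hx.le k)

lemma integral_Ioc_zero_rpow {r : ℝ} (hr : -1 < r) {a : ℝ} (ha : 0 ≤ a) :
    ∫ t in Ioc 0 a, t ^ r = a ^ (r + 1) / (r + 1) := by
  rw [← intervalIntegral.integral_of_le ha, integral_rpow (Or.inl hr),
    zero_rpow (by linarith), sub_zero]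

lemma integrableOn_Ioc_zero_rpow {r : ℝ} (hr : -1 < r) {a : ℝ} (ha : 0 ≤ a) :
    IntegrableOn (fun t => t ^ r) (Ioc 0 a) :=
  (intervalIntegrable_iff_integrableOn_Ioc_of_le ha).1
    (intervalIntegral.intervalIntegrable_rpow' hr)

lemma sq_rpow_div_two {ε : ℝ} (hε : 0 ≤ ε) (n : ℕ) : (ε ^ 2) ^ ((n : ℝ) / 2) = ε ^ n := by
  rw [← rpow_natCast ε 2, ← rpow_mul hε, ← rpow_natCast]
  congr 1
  push_cast
  ring

section TimeKer

variable {n : ℕ} {ε t : ℝ}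

lemma timeKer_nonneg (ht : 0 < t) : 0 ≤ timeKer n ε t := by
  unfold timeKer
  positivity

lemma measurable_timeKer : Measurable (timeKer n ε) := by
  unfold timeKer
  fun_prop

lemma timeKer_eq (ht : 0 < t) :
    timeKer n ε t = exp (-ε ^ 2 / (4 * t)) * t ^ (-((n : ℝ) / 2) - 1) / (2 * √π) ^ n := by
  have hpow : t * √t ^ n = t ^ ((n : ℝ) / 2 + 1) := by
    rw [rpow_add_one ht.ne', sqrt_eq_rpow, ← rpow_natCast, ← rpow_mul ht.le]
    ring_nf
  rw [timeKer, sqrt_mul pi_pos.le, mul_pow, mul_pow, ← neg_add', rpow_neg ht.le, ← hpow]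
  field_simp
  ring

lemma timeKer_le_rpow_neg_sub_one (ht : 0 < t) :
    timeKer n ε t ≤ t ^ (-((n : ℝ) / 2) - 1) / (2 * √π) ^ n := by
  rw [timeKer_eq ht]
  gcongr
  refine mul_le_of_le_one_left (rpow_nonneg ht.le _) (exp_le_one_iff.2 ?_)
  exact div_nonpos_of_nonpos_of_nonneg (neg_nonpos.2 (sq_nonneg ε)) (by positivity)

lemma timeKer_le_mul_rpow_sub_one (hε : 0 < ε) (ht : 0 < t) :
    timeKer n ε t ≤ n.factorial * 4 ^ n / ((2 * √π) ^ n * ε ^ (2 * n)) * t ^ ((n : ℝ) / 2 - 1) := by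
  have hexp : exp (-ε ^ 2 / (4 * t)) ≤ n.factorial * (4 * t) ^ n / ε ^ (2 * n) := by
    rw [neg_div]
    refine (exp_neg_le_factorial_div_pow (by positivity) n).trans_eq ?_
    rw [div_pow, pow_mul]
    field_simp
  have hpow : t ^ n * t ^ (-((n : ℝ) / 2) - 1) = t ^ ((n : ℝ) / 2 - 1) := by
    rw [← rpow_natCast, ← rpow_add ht]
    ring_nf
  rw [timeKer_eq ht]
  calc exp (-ε ^ 2 / (4 * t)) * t ^ (-((n : ℝ) / 2) - 1) / (2 * √π) ^ n
      ≤ n.factorial * (4 * t) ^ n / ε ^ (2 * n) * t ^ (-((n : ℝ) / 2) - 1) / (2 * √π) ^ n := by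
        gcongr
    _ = n.factorial * 4 ^ n / ((2 * √π) ^ n * ε ^ (2 * n)) *
          (t ^ n * t ^ (-((n : ℝ) / 2) - 1)) := by
        field_simp
        ring
    _ = _ := by rw [hpow]

end TimeKer

section TimeKerIntegral

variable {n : ℕ} {ε : ℝ}

lemma integrableOn_timeKer_of_le {s : Set ℝ} (hs : MeasurableSet s) (hs0 : s ⊆ Ioi 0)
    {g : ℝ → ℝ} (hg : IntegrableOn g s) (hle : ∀ t ∈ s, timeKer n ε t ≤ g t) :
    IntegrableOn (timeKer n ε) s :=
  hg.mono' measurable_timeKer.aestronglyMeasurable <| (ae_restrict_iff' hs).2 <|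
    ae_of_all _ fun t ht => by
      rw [norm_of_nonneg (timeKer_nonneg (hs0 ht))]
      exact hle t ht

lemma integrableOn_Ioc_timeKer (hn : 0 < n) (hε : 0 < ε) :
    IntegrableOn (timeKer n ε) (Ioc 0 (ε ^ 2)) :=
  integrableOn_timeKer_of_le measurableSet_Ioc Ioc_subset_Ioi_self
    ((integrableOn_Ioc_zero_rpow (by simp [hn]) (sq_nonneg ε)).const_mul _)
    fun _ ht => timeKer_le_mul_rpow_sub_one hε ht.1

lemma integrableOn_Ioi_timeKer (hn : 0 < n) (hε : 0 < ε) :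
    IntegrableOn (timeKer n ε) (Ioi (ε ^ 2)) :=
  integrableOn_timeKer_of_le measurableSet_Ioi (Ioi_subset_Ioi (sq_nonneg ε))
    ((integrableOn_Ioi_rpow_of_lt (by linarith [(Nat.cast_pos (α := ℝ)).2 hn])
      (by positivity)).div_const _)
    fun _ ht => timeKer_le_rpow_neg_sub_one ((sq_nonneg ε).trans_lt ht)

lemma integrableOn_Ioi_zero_timeKer (hn : 0 < n) (hε : 0 < ε) :
    IntegrableOn (timeKer n ε) (Ioi 0) := by
  rw [← Ioc_union_Ioi_eq_Ioi (sq_nonneg ε)]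
  exact (integrableOn_Ioc_timeKer hn hε).union (integrableOn_Ioi_timeKer hn hε)

lemma setIntegral_Ioc_timeKer_le (hn : 0 < n) (hε : 0 < ε) :
    ∫ t in Ioc 0 (ε ^ 2), timeKer n ε t ≤
      n.factorial * 4 ^ n / (2 * √π) ^ n * (2 / n) / ε ^ n := by
  have hr : -1 < (n : ℝ) / 2 - 1 := by simp [hn]
  calc ∫ t in Ioc 0 (ε ^ 2), timeKer n ε t
      ≤ ∫ t in Ioc 0 (ε ^ 2), n.factorial * 4 ^ n / ((2 * √π) ^ n * ε ^ (2 * n)) *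
          t ^ ((n : ℝ) / 2 - 1) :=
        setIntegral_mono_on (integrableOn_Ioc_timeKer hn hε)
          ((integrableOn_Ioc_zero_rpow hr (sq_nonneg ε)).const_mul _) measurableSet_Ioc
          fun _ ht => timeKer_le_mul_rpow_sub_one hε ht.1
    _ = n.factorial * 4 ^ n / (2 * √π) ^ n * (2 / n) / ε ^ n := by
        rw [integral_const_mul, integral_Ioc_zero_rpow hr (sq_nonneg ε), sub_add_cancel,
          sq_rpow_div_two hε.le, pow_mul']
        field_simp

lemma setIntegral_Ioi_timeKer_le (hn : 0 < n) (hε : 0 < ε) :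
    ∫ t in Ioi (ε ^ 2), timeKer n ε t ≤ 1 / (2 * √π) ^ n * (2 / n) / ε ^ n := by
  have hr : -((n : ℝ) / 2) - 1 < -1 := by linarith [(Nat.cast_pos (α := ℝ)).2 hn]
  calc ∫ t in Ioi (ε ^ 2), timeKer n ε t
      ≤ ∫ t in Ioi (ε ^ 2), t ^ (-((n : ℝ) / 2) - 1) / (2 * √π) ^ n :=
        setIntegral_mono_on (integrableOn_Ioi_timeKer hn hε)
          ((integrableOn_Ioi_rpow_of_lt hr (by positivity)).div_const _) measurableSet_Ioi
          fun _ ht => timeKer_le_rpow_neg_sub_one ((sq_nonneg ε).trans_lt ht)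
    _ = 1 / (2 * √π) ^ n * (2 / n) / ε ^ n := by
        rw [integral_div, integral_Ioi_rpow_of_lt hr (by positivity), sub_add_cancel,
          rpow_neg (sq_nonneg ε), sq_rpow_div_two hε.le]
        field_simp

lemma pow_mul_setIntegral_timeKer_le (hn : 0 < n) (hε : 0 < ε) :
    ε ^ n * ∫ t in Ioc 0 1, timeKer n ε t ≤
      (n.factorial * 4 ^ n + 1) / (2 * √π) ^ n * (2 / n) := by
  have hsplit : ∫ t in Ioi 0, timeKer n ε t =
      (∫ t in Ioc 0 (ε ^ 2), timeKer n ε t) + ∫ t in Ioi (ε ^ 2), timeKer n ε t := by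
    rw [← Ioc_union_Ioi_eq_Ioi (sq_nonneg ε), setIntegral_union Ioc_disjoint_Ioi_same
      measurableSet_Ioi (integrableOn_Ioc_timeKer hn hε) (integrableOn_Ioi_timeKer hn hε)]
  have hmono : ∫ t in Ioc 0 1, timeKer n ε t ≤ ∫ t in Ioi 0, timeKer n ε t := by
    refine setIntegral_mono_set (integrableOn_Ioi_zero_timeKer hn hε) ?_
      Ioc_subset_Ioi_self.eventuallyLE
    exact (ae_restrict_iff' measurableSet_Ioi).2 (ae_of_all _ fun _ ht => timeKer_nonneg ht)
  have hbound := (hmono.trans_eq hsplit).trans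
    (add_le_add (setIntegral_Ioc_timeKer_le hn hε) (setIntegral_Ioi_timeKer_le hn hε))
  calc ε ^ n * ∫ t in Ioc 0 1, timeKer n ε t
      ≤ ε ^ n * (n.factorial * 4 ^ n / (2 * √π) ^ n * (2 / n) / ε ^ n +
          1 / (2 * √π) ^ n * (2 / n) / ε ^ n) := by gcongr
    _ = (n.factorial * 4 ^ n + 1) / (2 * √π) ^ n * (2 / n) := by
        field_simp

end TimeKerIntegral

lemma abs_integral_mul_le_of_abs_le {α : Type*} [MeasurableSpace α] {μ : Measure α}
    {f g : α → ℝ} {M : ℝ} (hf : ∀ᵐ x ∂μ, |f x| ≤ M) (hg : Integrable g μ) (hg0 : 0 ≤ᵐ[μ] g) :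
    |∫ x, f x * g x ∂μ| ≤ M * ∫ x, g x ∂μ := by
  rw [← integral_const_mul, ← Real.norm_eq_abs]
  refine norm_integral_le_of_norm_le (hg.const_mul M) ?_
  filter_upwards [hf, hg0] with x hfx hgx
  rw [norm_mul, norm_of_nonneg hgx, Real.norm_eq_abs]
  exact mul_le_mul_of_nonneg_right hfx hgx

lemma alphaFun_succ_eq {m : ℕ} (hn : 0 < m + 1) (φ : ℝ → ℝ) {ε : ℝ} (hε : 0 < ε) :
    alphaFun (m + 1) hn φ ε = -(∫ w : Fin m → ℝ, √(ε ^ 2 - ∑ j, w j ^ 2)) *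
      ∫ t in Ioc 0 1, φ t * timeKer (m + 1) ε t := by
  rw [alphaFun, ← integral_const_mul]
  refine setIntegral_congr_fun measurableSet_Ioc fun t ht => ?_
  rw [setIntegral_d2GaussKer hn ht.1.ne' hε]
  ring

/-- For `n ≥ 1` and `φ ∈ L^∞((0,∞))`, the function `α` is bounded on `(0,∞)`. -/
theorem alphaFun_bounded (n : ℕ) (hn : 0 < n) (φ : ℝ → ℝ)
    (hφ : MemLp φ ⊤ (volume.restrict (Ioi (0 : ℝ)))) :
    ∃ C > (0 : ℝ), ∀ ε : ℝ, 0 < ε → |alphaFun n hn φ ε| ≤ C := by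
  obtain ⟨m, rfl⟩ : ∃ m, n = m + 1 := ⟨n - 1, by omega⟩
  set M := lpNorm φ ⊤ (volume.restrict (Ioi 0))
  set K := ((m + 1).factorial * 4 ^ (m + 1) + 1) / (2 * √π) ^ (m + 1) * (2 / (m + 1 : ℕ))
  have hM : 0 ≤ M := lpNorm_nonneg
  refine ⟨2 ^ m * M * K + 1, by positivity, fun ε hε => ?_⟩
  have hφ_le : |∫ t in Ioc 0 1, φ t * timeKer (m + 1) ε t| ≤
      M * ∫ t in Ioc 0 1, timeKer (m + 1) ε t :=
    abs_integral_mul_le_of_abs_le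
      (ae_restrict_of_ae_restrict_of_subset Ioc_subset_Ioi_self (ae_le_lpNorm_exponent_top hφ))
      ((integrableOn_Ioi_zero_timeKer hn hε).mono_set Ioc_subset_Ioi_self)
      ((ae_restrict_iff' measurableSet_Ioc).2 (ae_of_all _ fun _ ht => timeKer_nonneg ht.1))
  calc |alphaFun (m + 1) hn φ ε|
      = (∫ w : Fin m → ℝ, √(ε ^ 2 - ∑ j, w j ^ 2)) *
          |∫ t in Ioc 0 1, φ t * timeKer (m + 1) ε t| := by
        rw [alphaFun_succ_eq hn φ hε, abs_mul, abs_neg,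
          abs_of_nonneg (integral_nonneg fun _ => sqrt_nonneg _)]
    _ ≤ ε * (2 * ε) ^ m * (M * ∫ t in Ioc 0 1, timeKer (m + 1) ε t) := by
        gcongr
        exact integral_sqrt_sub_sum_sq_le hε.le
    _ = 2 ^ m * M * (ε ^ (m + 1) * ∫ t in Ioc 0 1, timeKer (m + 1) ε t) := by ring
    _ ≤ 2 ^ m * M * K := by gcongr; exact pow_mul_setIntegral_timeKer_le hn hε
    _ ≤ 2 ^ m * M * K + 1 := by linarith
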